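/- arXiv:0801.3773 — 6 statements merged into one kernel-verified Lean document; each statement's English description precedes it below -/
import Mathlib

section
/- Let k < n and suppose A_2 = (A_{21} | A_{22}) is an (n−k)×n matrix over a field of full rank n−k, B_1 = (B_{11} | B_{12}) is a k×n matrix of full rank with B_{11} (k×k) invertible, A_2 B_1^T = 0, and the row space of B_1 equals the orthogonal complement (under the standard bilinear form) of the row space of A_2. Then the (n−k)×(n−k) block A_{22} is invertible. -/
open scoped BigOperators

/-- Let `A_2 = (A_{21} | A_{22})` be an `l × n` matrix of full rank `l` (here `n = k + l`),
    `B_1 = (B_{11} | B_{12})` a `k × n` matrix of full rank `k` with `B_{11}` invertible,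
    `A_2 B_1ᵀ = 0`, and suppose the row space of `B_1` is the orthogonal complement
    (under the standard bilinear form) of the row space of `A_2`.
    Then the block `A_{22}` is invertible. -/
theorem stmt8 (k l : ℕ) (F : Type) [Field F]
    (A21 : Matrix (Fin l) (Fin k) F) (A22 : Matrix (Fin l) (Fin l) F)
    (B11 : Matrix (Fin k) (Fin k) F) (B12 : Matrix (Fin k) (Fin l) F)
    (hA2rank : (Matrix.fromCols A21 A22).rank = l)
    (hB1rank : (Matrix.fromCols B11 B12).rank = k)
    (hB11 : IsUnit B11)
    (horth : Matrix.fromCols A21 A22 * (Matrix.fromCols B11 B12).transpose = 0)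
    (hcompl :
      (Submodule.span F (Set.range fun i => Matrix.fromCols B11 B12 i) :
          Set ((Fin k ⊕ Fin l) → F)) =
        {x | ∀ y ∈ Submodule.span F (Set.range fun i => Matrix.fromCols A21 A22 i),
          ∑ j, x j * y j = 0}) :
    IsUnit A22 := by
  rw [← Matrix.mulVec_injective_iff_isUnit]
  have key : ∀ x, A22.mulVec x = 0 → x = 0 := by
    intro x hx
    set x' : (Fin k ⊕ Fin l) → F := Sum.elim 0 x with hx'
    have hmem : x' ∈ (Submodule.span F (Set.range fun i => Matrix.fromCols B11 B12 i) :
        Set ((Fin k ⊕ Fin l) → F)) := by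
      rw [hcompl]
      intro y hy
      induction hy using Submodule.span_induction with
      | mem y hy =>
        obtain ⟨i, rfl⟩ := hy
        have h0 : (Matrix.fromCols A21 A22).mulVec x' i = 0 := by
          have h1 : (Matrix.fromCols A21 A22).mulVec x' = A21.mulVec 0 + A22.mulVec x := by
            rw [Matrix.fromCols_mulVec_sumElim]
          rw [h1, Matrix.mulVec_zero, hx]
          simp
        rw [← h0]
        simp [Matrix.mulVec, dotProduct, mul_comm]
      | zero => simp
      | add a b _ _ ha hb => simp [mul_add, Finset.sum_add_distrib, ha, hb]
      | smul c a _ ha =>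
        simp only [Pi.smul_apply, smul_eq_mul]
        calc ∑ j, x' j * (c * a j) = c * ∑ j, x' j * a j := by
              rw [Finset.mul_sum]; congr 1; funext j; ring
          _ = 0 := by rw [ha, mul_zero]
    obtain ⟨c, hc⟩ := (Submodule.mem_span_range_iff_exists_fun F).mp hmem
    have hck : Matrix.vecMul c B11 = 0 := by
      funext j
      have := congrFun hc (Sum.inl j)
      simpa [Matrix.vecMul, dotProduct, Matrix.fromCols, x'] using this
    have hc0 : c = 0 :=
      Matrix.vecMul_injective_iff_isUnit.mpr hB11 (by simpa [Matrix.zero_vecMul] using hck)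
    funext j
    have := congrFun hc (Sum.inr j)
    simp [hc0, Matrix.fromCols, x'] at this
    exact this.symm
  intro x y hxy
  have := key (x - y) (by rw [Matrix.mulVec_sub, hxy, sub_self])
  exact sub_eq_zero.mp this
end

section
/- Every self-dual (with respect to the symplectic inner product) additive code over F_{m^2} of length n is equivalent, under symplectic coordinate transformations, to a graph code, i.e., to a code with a generator matrix of the form Γ + ωI where Γ is a symmetric n×n matrix over F_m with zero diagonal. -/
open scoped BigOperators

/-- The trace map from `F_{p^r}` to the prime field `F_p`, computed inside `F`. -/
def fieldTr {F : Type*} [Field F] (p r : ℕ) (x : F) : F :=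
  ∑ i ∈ Finset.range r, x ^ p ^ i

/-- The symplectic (trace) inner product on `(F_m × F_m)^n`. -/
def sympForm {F : Type*} [Field F] (p r : ℕ) {n : ℕ} (u v : Fin n → F × F) : F :=
  fieldTr p r (∑ i, ((u i).2 * (v i).1 - (v i).2 * (u i).1))

/-- Action of an element of `Sp_2(F_m)` on a coordinate `F_m × F_m ≅ F_{m^2}`. -/
def sl2Apply {F : Type*} [Field F] (M : Matrix.SpecialLinearGroup (Fin 2) F)
    (x : F × F) : F × F :=
  (M.1 0 0 * x.1 + M.1 0 1 * x.2, M.1 1 0 * x.1 + M.1 1 1 * x.2)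

/-!
Rescaling by `λ ∈ F` shows that a code on which the traced symplectic form vanishes is already
isotropic for the untraced form `∑ᵢ (yᵢ x'ᵢ - y'ᵢ xᵢ)`, the trace being a nonzero map; by the
size hypothesis `C` is then a Lagrangian subspace of `(F × F)ⁿ`.

Let `U = {a | (a, 0) ∈ C}` and let `s` be an information set of `U`. Applying
`J = [[0, -1], [1, 0]]` on the coordinates in `s` makes the projection to the second components
injective on the transformed code, hence bijective by dimension count, so the transformed code is
the graph `{(λ Γ, λ)}` of a matrix `Γ`, which isotropy forces to be symmetric. Finally the shears
`[[1, -Γᵢᵢ], [0, 1]]` clear the diagonal of `Γ`; no permutation of coordinates is needed.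
-/

lemma exists_fieldTr_ne_zero {F : Type*} [Field F] [Fintype F] {p r : ℕ} (hp : p.Prime)
    (hF : Fintype.card F = p ^ r) : ∃ y : F, fieldTr p r y ≠ 0 := by
  have := Fact.mk hp
  have := charP_of_card_eq_prime_pow hF
  let := ZMod.algebra F p
  have hrank : Module.finrank (ZMod p) F = r := by
    have := Module.card_eq_pow_finrank (K := ZMod p) (V := F)
    rw [hF, ZMod.card] at this
    exact (Nat.pow_right_injective hp.two_le this).symm
  obtain ⟨y, hy⟩ := Algebra.trace_surjective (ZMod p) F 1
  have htrace := FiniteField.algebraMap_trace_eq_sum_pow (ZMod p) F y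
  rw [hy, Nat.card_zmod, hrank, map_one] at htrace
  exact ⟨y, by rw [fieldTr, ← htrace]; exact one_ne_zero⟩

section InformationSet

variable {F ι : Type*} [Field F]

def IsInformationSet (U : Submodule F (ι → F)) (s : Set ι) : Prop :=
  (∀ a ∈ U, (∀ i ∈ s, a i = 0) → a = 0) ∧ ∀ w : ι → F, ∃ a ∈ U, ∀ i ∈ s, a i = w i

variable [Finite ι]

lemma linearCombination_mkQ_basisFun (U : Submodule F (ι → F)) (l : ι →₀ F) :
    Finsupp.linearCombination F (U.mkQ ∘ Pi.basisFun F ι) l = U.mkQ l := by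
  rw [← Finsupp.apply_linearCombination, ← Module.Basis.repr_symm_apply]
  congr

lemma span_range_mkQ_basisFun (U : Submodule F (ι → F)) :
    Submodule.span F (Set.range (U.mkQ ∘ Pi.basisFun F ι)) = ⊤ := by
  rw [Set.range_comp, Submodule.span_image, Module.Basis.span_eq, Submodule.map_top,
    Submodule.range_mkQ]

/-- The complement of a set `b` of coordinates whose unit vectors form a basis of `(ι → F) ⧸ U`
is an information set of `U`. -/
lemma Submodule.exists_isInformationSet (U : Submodule F (ι → F)) :
    ∃ s, IsInformationSet U s := by
  obtain ⟨b, -, -, hspan, hli⟩ := exists_linearIndepOn_extension (K := F)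
    (v := U.mkQ ∘ Pi.basisFun F ι) (linearIndepOn_empty F _) (Set.empty_subset Set.univ)
  refine ⟨bᶜ, fun a ha hab => ?_, fun w => ?_⟩
  · have hl : Finsupp.equivFunOnFinite.symm a ∈ Finsupp.supported F F b :=
      (Finsupp.mem_supported' F _).2 hab
    have := linearIndepOn_iff.1 hli _ hl (by
      rw [linearCombination_mkQ_basisFun]; simpa using ha)
    simpa using congrArg (⇑) this
  · have hw : U.mkQ w ∈ Submodule.span F ((U.mkQ ∘ Pi.basisFun F ι) '' b) := by
      refine Submodule.span_le.2 hspan ?_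
      rw [Set.image_univ, span_range_mkQ_basisFun]
      trivial
    obtain ⟨l, hl, hlw⟩ := (Finsupp.mem_span_image_iff_linearCombination F).1 hw
    rw [linearCombination_mkQ_basisFun] at hlw
    refine ⟨w - l, ?_, fun i hi => ?_⟩
    · rw [← Submodule.Quotient.mk_eq_zero, Submodule.Quotient.mk_sub]
      exact sub_eq_zero.2 hlw.symm
    · simp [(Finsupp.mem_supported' F _).1 hl i hi]

end InformationSet

section Isotropic

variable {F M : Type*} [Field F] [AddCommGroup M] [Module F M]

def IsIsotropic (B : LinearMap.BilinForm F M) (C : Submodule F M) : Prop :=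
  ∀ u ∈ C, ∀ v ∈ C, B u v = 0

lemma isIsotropic_of_forall_comp_eq_zero (B : LinearMap.BilinForm F M) {T : F → F}
    (hT : ∃ y, T y ≠ 0) {C : Submodule F M} (hC : ∀ u ∈ C, ∀ v ∈ C, T (B u v) = 0) :
    IsIsotropic B C := by
  intro u hu v hv
  by_contra hne
  obtain ⟨y, hy⟩ := hT
  have := hC u hu ((y * (B u v)⁻¹) • v) (C.smul_mem _ hv)
  rw [map_smul, smul_eq_mul, mul_assoc, inv_mul_cancel₀ hne, mul_one] at this
  exact hy this

end Isotropic

section Symplectic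

variable {F ι : Type*} [Field F] [Fintype ι]

def symplecticForm : LinearMap.BilinForm F (ι → F × F) := by
  refine LinearMap.mk₂ F (fun u v => ∑ i, ((u i).2 * (v i).1 - (v i).2 * (u i).1)) ?_ ?_ ?_ ?_ <;>
  · intros
    simp only [Pi.add_apply, Pi.smul_apply, Prod.fst_add, Prod.snd_add, Prod.smul_fst,
      Prod.smul_snd, smul_eq_mul, Finset.mul_sum, ← Finset.sum_add_distrib]
    congr! 1
    ring

lemma symplecticForm_apply (u v : ι → F × F) :
    symplecticForm u v = ∑ i, ((u i).2 * (v i).1 - (v i).2 * (u i).1) := rfl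

lemma sympForm_eq_fieldTr_symplecticForm (p r : ℕ) {n : ℕ} (u v : Fin n → F × F) :
    sympForm p r u v = fieldTr p r (symplecticForm u v) := rfl

end Symplectic

section SL2

variable {F : Type*} [Field F]

open Matrix

@[simp]
lemma sl2Apply_one (x : F × F) : sl2Apply 1 x = x := by
  simp [sl2Apply]

lemma sl2Apply_mul (M N : SpecialLinearGroup (Fin 2) F) (x : F × F) :
    sl2Apply (M * N) x = sl2Apply M (sl2Apply N x) := by
  have hMN : (M * N).1 = M.1 * N.1 := rfl
  simp only [sl2Apply, hMN, mul_apply, Fin.sum_univ_two]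
  ext <;> ring

def sl2J : SpecialLinearGroup (Fin 2) F :=
  ⟨!![0, -1; 1, 0], by simp [det_fin_two_of]⟩

def sl2Shear (a : F) : SpecialLinearGroup (Fin 2) F :=
  ⟨!![1, a; 0, 1], by simp [det_fin_two_of]⟩

@[simp]
lemma sl2Apply_sl2J (x : F × F) : sl2Apply sl2J x = (-x.2, x.1) := by
  simp [sl2Apply, sl2J]

@[simp]
lemma sl2Apply_sl2Shear (a : F) (x : F × F) :
    sl2Apply (sl2Shear a) x = (x.1 + a * x.2, x.2) := by
  simp [sl2Apply, sl2Shear]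

variable {ι : Type*}

def sl2ApplyPi (S : ι → SpecialLinearGroup (Fin 2) F) : (ι → F × F) →ₗ[F] (ι → F × F) where
  toFun u i := sl2Apply (S i) (u i)
  map_add' u v := by
    ext i <;> simp only [sl2Apply, Pi.add_apply, Prod.fst_add, Prod.snd_add] <;> ring
  map_smul' c u := by
    ext i <;> simp only [sl2Apply, Pi.smul_apply, Prod.smul_fst, Prod.smul_snd, smul_eq_mul,
      RingHom.id_apply] <;> ring

@[simp]
lemma sl2ApplyPi_apply (S : ι → SpecialLinearGroup (Fin 2) F) (u : ι → F × F) (i : ι) :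
    sl2ApplyPi S u i = sl2Apply (S i) (u i) := rfl

lemma sl2ApplyPi_mul (S T : ι → SpecialLinearGroup (Fin 2) F) :
    sl2ApplyPi (S * T) = sl2ApplyPi S ∘ₗ sl2ApplyPi T := by
  ext u i : 2
  exact sl2Apply_mul _ _ _

lemma sl2ApplyPi_injective (S : ι → SpecialLinearGroup (Fin 2) F) :
    Function.Injective (sl2ApplyPi S) := by
  refine Function.LeftInverse.injective (g := sl2ApplyPi S⁻¹) fun u => ?_
  ext i : 1
  simp [← sl2Apply_mul]

variable [Fintype ι]

lemma symplecticForm_sl2ApplyPi (S : ι → SpecialLinearGroup (Fin 2) F) (u v : ι → F × F) :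
    symplecticForm (sl2ApplyPi S u) (sl2ApplyPi S v) = symplecticForm u v := by
  simp only [symplecticForm_apply, sl2ApplyPi_apply, sl2Apply]
  refine Finset.sum_congr rfl fun i _ => ?_
  have hdet := (S i).2
  rw [det_fin_two] at hdet
  linear_combination ((u i).2 * (v i).1 - (v i).2 * (u i).1) * hdet

lemma IsIsotropic.map_sl2ApplyPi {C : Submodule F (ι → F × F)}
    (hC : IsIsotropic symplecticForm C) (S : ι → SpecialLinearGroup (Fin 2) F) :
    IsIsotropic symplecticForm (C.map (sl2ApplyPi S)) := by
  rintro _ ⟨u, hu, rfl⟩ _ ⟨v, hv, rfl⟩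
  rw [symplecticForm_sl2ApplyPi]
  exact hC u hu v hv

lemma exists_sl2_transversal {C : Submodule F (ι → F × F)} (hC : IsIsotropic symplecticForm C) :
    ∃ T : ι → SpecialLinearGroup (Fin 2) F,
      ∀ c ∈ C, (∀ i, (sl2Apply (T i) (c i)).2 = 0) → c = 0 := by
  classical
  let inlPi : (ι → F) →ₗ[F] (ι → F × F) := (LinearMap.inl F F F).compLeft ι
  obtain ⟨s, hs_inj, hs_surj⟩ := (C.comap inlPi).exists_isInformationSet
  refine ⟨fun i => if i ∈ s then sl2J else 1, fun c hc h0 => ?_⟩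
  have hfst : ∀ i ∈ s, (c i).1 = 0 := fun i hi => by simpa [hi] using h0 i
  have hsnd_out : ∀ i ∉ s, (c i).2 = 0 := fun i hi => by simpa [hi] using h0 i
  have hsnd : ∀ j, (c j).2 = 0 := by
    intro j
    by_cases hj : j ∈ s
    · -- pair `c` with `(a, 0) ∈ C`, where `a` restricts to the unit vector `eⱼ` on `s`
      obtain ⟨a, ha, haj⟩ := hs_surj (Pi.single j 1)
      have hca := hC _ ha c hc
      calc (c j).2 = ∑ i, (c i).2 * (Pi.single j (1 : F) : ι → F) i := by
            simp [Pi.single_apply]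
        _ = ∑ i, (c i).2 * a i := Finset.sum_congr rfl fun i _ => by
          by_cases hi : i ∈ s
          · rw [haj i hi]
          · rw [hsnd_out i hi, zero_mul, zero_mul]
        _ = 0 := by simpa [symplecticForm_apply, inlPi] using hca
    · exact hsnd_out j hj
  have hc' : c = inlPi (fun i => (c i).1) := funext fun i => Prod.ext rfl (hsnd i)
  rw [hc', hs_inj _ (by rwa [Submodule.mem_comap, ← hc']) hfst, map_zero]

end SL2

section GraphCode

variable {F ι : Type*} [Field F] [Fintype ι]

open Matrix

def graphMap (Γ : Matrix ι ι F) : (ι → F) →ₗ[F] (ι → F × F) where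
  toFun lam i := ((lam ᵥ* Γ) i, lam i)
  map_add' lam mu := by ext i <;> simp [add_vecMul]
  map_smul' c lam := by ext i <;> simp [smul_vecMul]

def graphCode (Γ : Matrix ι ι F) : Submodule F (ι → F × F) :=
  LinearMap.range (graphMap Γ)

variable [DecidableEq ι]

lemma graphCode_map_sl2Shear (Γ : Matrix ι ι F) :
    (graphCode Γ).map (sl2ApplyPi fun i => sl2Shear (-Γ i i)) =
      graphCode (Γ - diagonal Γ.diag) := by
  rw [graphCode, graphCode, ← LinearMap.range_comp]
  congr 1
  refine LinearMap.ext fun lam => funext fun i => ?_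
  simp only [graphMap, LinearMap.comp_apply, LinearMap.coe_mk, AddHom.coe_mk, sl2ApplyPi_apply,
    sl2Apply_sl2Shear, vecMul_sub, vecMul_diagonal, Pi.sub_apply, diag_apply]
  ext <;> simp only
  ring

lemma exists_isSymm_eq_graphCode {D : Submodule F (ι → F × F)}
    (hD : IsIsotropic symplecticForm D) (hinj : ∀ d ∈ D, (∀ i, (d i).2 = 0) → d = 0)
    (hdim : Module.finrank F D = Fintype.card ι) :
    ∃ Γ : Matrix ι ι F, Γ.IsSymm ∧ D = graphCode Γ := by
  let f : D →ₗ[F] (ι → F) := (LinearMap.snd F F F).compLeft ι ∘ₗ D.subtype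
  have hf : Function.Injective f := by
    rw [← LinearMap.ker_eq_bot, LinearMap.ker_eq_bot']
    exact fun d hd => Subtype.ext (hinj d d.2 (congrFun hd))
  let e := LinearEquiv.ofBijective f ⟨hf, (LinearMap.injective_iff_surjective_of_finrank_eq_finrank
    (by rw [hdim, Module.finrank_fintype_fun_eq_card])).1 hf⟩
  let Γ : Matrix ι ι F := of fun k i => ((e.symm (Pi.single k 1) : ι → F × F) i).1
  have hsnd : ∀ lam i, ((e.symm lam : ι → F × F) i).2 = lam i := fun lam i =>
    congrFun (e.apply_symm_apply lam) i
  have hgraph : graphMap Γ = D.subtype ∘ₗ e.symm.toLinearMap := by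
    ext k i : 3
    refine Prod.ext ?_ (hsnd (Pi.single k 1) i).symm
    simp [graphMap, Γ]
  refine ⟨Γ, IsSymm.ext fun k l => ?_, ?_⟩
  · have := hD _ (e.symm (Pi.single l 1)).2 _ (e.symm (Pi.single k 1)).2
    simp only [symplecticForm_apply, hsnd, Finset.sum_sub_distrib, Pi.single_apply, ite_mul,
      one_mul, zero_mul, Finset.sum_ite_eq', Finset.mem_univ, if_true, sub_eq_zero] at this
    exact this.symm
  · rw [graphCode, hgraph, LinearMap.range_comp, LinearEquiv.range, Submodule.map_top,
      Submodule.range_subtype]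

end GraphCode

lemma Module.finrank_eq_of_natCard_eq_pow {F V : Type*} [Field F] [Fintype F] [AddCommGroup V]
    [Module F V] [Finite V] {k : ℕ} (h : Nat.card V = Fintype.card F ^ k) :
    Module.finrank F V = k := by
  have := Fintype.ofFinite V
  rw [Nat.card_eq_fintype_card, Module.card_eq_pow_finrank (K := F)] at h
  exact Nat.pow_right_injective Fintype.one_lt_card h

theorem stmt9_general (p r n m : ℕ) (hp : p.Prime) (hm : m = p ^ r)
    (F : Type) [Field F] [Fintype F] (hF : Fintype.card F = m)
    (C : Submodule F (Fin n → F × F))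
    (hcard : Nat.card C = m ^ n)
    (hsd : ∀ u, u ∈ C ↔ ∀ c ∈ C, sympForm p r u c = 0) :
    ∃ (σ : Equiv.Perm (Fin n)) (S : Fin n → Matrix.SpecialLinearGroup (Fin 2) F)
      (Γ : Matrix (Fin n) (Fin n) F),
      Γ.IsSymm ∧ (∀ i, Γ i i = 0) ∧
      ∀ u : Fin n → F × F,
        (∃ c ∈ C, (fun i => sl2Apply (S i) (c (σ⁻¹ i))) = u) ↔
        ∃ lam : Fin n → F, u = fun i => ((∑ k, lam k * Γ k i : F), lam i) := by
  have hC : IsIsotropic symplecticForm C :=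
    isIsotropic_of_forall_comp_eq_zero _ (exists_fieldTr_ne_zero hp (hF.trans hm))
      fun u hu v hv => (sympForm_eq_fieldTr_symplecticForm p r u v).symm ▸ (hsd u).1 hu v hv
  obtain ⟨T, hT⟩ := exists_sl2_transversal hC
  obtain ⟨Γ, hΓ, hD⟩ := exists_isSymm_eq_graphCode (hC.map_sl2ApplyPi T)
    (by rintro _ ⟨c, hc, rfl⟩ h; rw [hT c hc h, map_zero])
    (by rw [← (C.equivMapOfInjective _ (sl2ApplyPi_injective T)).finrank_eq,
      Module.finrank_eq_of_natCard_eq_pow (hcard.trans (by rw [hF])), Fintype.card_fin])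
  let Γ₀ := Γ - Matrix.diagonal Γ.diag
  have hmap : C.map (sl2ApplyPi ((fun i => sl2Shear (-Γ i i)) * T)) = graphCode Γ₀ := by
    rw [sl2ApplyPi_mul, Submodule.map_comp, hD, graphCode_map_sl2Shear]
  refine ⟨1, (fun i => sl2Shear (-Γ i i)) * T, Γ₀, hΓ.sub (Matrix.isSymm_diagonal _),
    by simp [Γ₀], fun u => ?_⟩
  have hu := Submodule.ext_iff.1 hmap u
  simp only [Submodule.mem_map, graphCode, LinearMap.mem_range] at hu
  simpa [eq_comm, graphMap, sl2ApplyPi, Matrix.vecMul, dotProduct] using hu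

/-- Every self-dual additive code over `F_{m^2}` of length `n` is equivalent, under a
    coordinate permutation combined with per-coordinate symplectic transformations, to a
    graph code: a code generated by `(Γ | I)`, i.e. `Γ + ωI`, with `Γ` symmetric with
    zero diagonal. -/
theorem stmt9 (p r n m : ℕ) (hp : p.Prime) (hr : 0 < r) (hm : m = p ^ r)
    (F : Type) [Field F] [Fintype F] (hF : Fintype.card F = m)
    (C : Submodule F (Fin n → F × F))
    (hcard : Nat.card C = m ^ n)
    (hsd : ∀ u, u ∈ C ↔ ∀ c ∈ C, sympForm p r u c = 0) :
    ∃ (σ : Equiv.Perm (Fin n)) (S : Fin n → Matrix.SpecialLinearGroup (Fin 2) F)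
      (Γ : Matrix (Fin n) (Fin n) F),
      Γ.IsSymm ∧ (∀ i, Γ i i = 0) ∧
      ∀ u : Fin n → F × F,
        (∃ c ∈ C, (fun i => sl2Apply (S i) (c (σ⁻¹ i))) = u) ↔
        ∃ lam : Fin n → F, u = fun i => ((∑ k, lam k * Γ k i : F), lam i) :=
  stmt9_general p r n m hp hm F hF C hcard hsd
end

section
/- Local complementation preserves the code equivalence class: if G is a simple graph on n vertices with adjacency matrix Γ over F_2, and G*v is obtained by complementing the induced subgraph on the neighborhood of v, then the self-dual additive codes over F_4 generated by Γ + ωI and Γ' + ωI (Γ' the adjacency matrix of G*v) are equivalent under symplectic coordinate transformations. -/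
open scoped BigOperators

/-- Local complementation preserves code equivalence: if `G` is a simple graph with
    adjacency matrix `Γ` over `F_2` and `Γ'` is the adjacency matrix of `G * v`
    (`Γ'_{ij} = Γ_{ij} + Γ_{vi}Γ_{vj}` for `i ≠ j`, zero diagonal), then the self-dual
    additive codes over `F_4` generated by `Γ + ωI` and `Γ' + ωI` (i.e. by `(Γ|I)` and
    `(Γ'|I)` in the symplectic representation) are equivalent under symplectic coordinate
    transformations. -/
theorem stmt10 (n : ℕ) (v : Fin n) (Γ Γ' : Matrix (Fin n) (Fin n) (ZMod 2))
    (hsym : Γ.IsSymm) (hdiag : ∀ i, Γ i i = 0)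
    (hΓ' : ∀ i j, Γ' i j = if i = j then 0 else Γ i j + Γ v i * Γ v j) :
    ∃ (σ : Equiv.Perm (Fin n)) (S : Fin n → Matrix.SpecialLinearGroup (Fin 2) (ZMod 2)),
      (fun u : Fin n → ZMod 2 × ZMod 2 => fun i => sl2Apply (S i) (u (σ⁻¹ i))) ''
          {u | ∃ lam : Fin n → ZMod 2, u = fun i => ((∑ k, lam k * Γ k i : ZMod 2), lam i)} =
        {u | ∃ lam : Fin n → ZMod 2, u = fun i => ((∑ k, lam k * Γ' k i : ZMod 2), lam i)} := by
  have hadd : ∀ x : ZMod 2, x + x = 0 := by decide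
  have hsymm : ∀ i j, Γ j i = Γ i j := by
    intro i j
    rw [← Matrix.transpose_apply Γ i j, hsym]
  have hΓ'v : ∀ i, Γ' v i = Γ v i := by
    intro i
    rw [hΓ' v i]
    split_ifs with h
    · rw [← h, hdiag]
    · rw [hdiag, zero_mul, add_zero]
  -- the parameter transformation
  set T : (Fin n → ZMod 2) → ZMod 2 := fun lam => ∑ k, lam k * Γ k v with hT
  set μ : (Fin n → ZMod 2) → (Fin n → ZMod 2) :=
    fun lam i => if i = v then lam v + T lam else lam i with hμ
  -- per-term identity
  have hterm : ∀ (lam : Fin n → ZMod 2) (i k : Fin n),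
      lam k * Γ' k i = lam k * Γ k i + lam k * Γ v k * Γ v i
        + (if k = i then lam i * Γ v i else 0) := by
    intro lam i k
    rw [hΓ' k i]
    by_cases h : k = i
    · subst h
      rw [if_pos rfl, if_pos rfl, hdiag]
      generalize lam k = a
      generalize Γ v k = b
      revert a b; decide
    · rw [if_neg h, if_neg h]
      ring
  have hsplit : ∀ (lam : Fin n → ZMod 2) (i : Fin n),
      (∑ k, lam k * Γ' k i)
        = (∑ k, lam k * Γ k i) + T lam * Γ v i + lam i * Γ v i := by
    intro lam i
    calc (∑ k, lam k * Γ' k i)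
        = ∑ k, (lam k * Γ k i + lam k * Γ v k * Γ v i
            + (if k = i then lam i * Γ v i else 0)) := by
          exact Finset.sum_congr rfl fun k _ => hterm lam i k
      _ = (∑ k, lam k * Γ k i) + (∑ k, lam k * Γ v k * Γ v i)
            + (∑ k, if k = i then lam i * Γ v i else 0) := by
          rw [Finset.sum_add_distrib, Finset.sum_add_distrib]
      _ = (∑ k, lam k * Γ k i) + T lam * Γ v i + lam i * Γ v i := by
          congr 1
          · congr 1
            rw [hT, Finset.sum_mul]
            exact Finset.sum_congr rfl fun k _ => by rw [hsymm k v]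
          · simp
  have hTμ : ∀ lam, T (μ lam) = T lam := by
    intro lam
    show (∑ k, μ lam k * Γ k v) = ∑ k, lam k * Γ k v
    have : ∀ k ∈ Finset.univ, μ lam k * Γ k v
        = lam k * Γ k v + (if k = v then T lam * Γ k v else 0) := by
      intro k _
      simp only [hμ]
      split_ifs with h
      · subst h; ring
      · ring
    rw [Finset.sum_congr rfl this, Finset.sum_add_distrib,
      Finset.sum_ite_eq' Finset.univ v (fun k => T lam * Γ k v)]
    simp [hdiag, hsymm v v]
  have hμμ : ∀ lam, μ (μ lam) = lam := by
    intro lam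
    funext i
    simp only [hμ]
    split_ifs with h
    · subst h
      have := hTμ lam
      simp only [hμ] at this ⊢
      rw [this, add_assoc, hadd, add_zero]
    · rfl
  -- the key computation : the first coordinate
  have key : ∀ (lam : Fin n → ZMod 2) (i : Fin n),
      (∑ k, μ lam k * Γ' k i) = (∑ k, lam k * Γ k i) + Γ v i * lam i := by
    intro lam i
    have step1 : (∑ k, μ lam k * Γ' k i)
        = (∑ k, lam k * Γ' k i) + T lam * Γ' v i := by
      have : ∀ k ∈ Finset.univ, μ lam k * Γ' k i
          = lam k * Γ' k i + (if k = v then T lam * Γ' k i else 0) := by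
        intro k _
        simp only [hμ]
        split_ifs with h
        · subst h; ring
        · ring
      rw [Finset.sum_congr rfl this, Finset.sum_add_distrib,
        Finset.sum_ite_eq' Finset.univ v (fun k => T lam * Γ' k i)]
      simp
    rw [step1, hsplit, hΓ'v]
    generalize (∑ k, lam k * Γ k i) = A
    generalize T lam = B
    generalize Γ v i = c
    generalize lam i = d
    revert A B c d; decide
  -- now assemble
  refine ⟨1, fun i => ⟨!![1, Γ v i; if i = v then 1 else 0, 1], ?_⟩, ?_⟩
  · rw [Matrix.det_fin_two_of]
    split_ifs with h
    · rw [← h, hdiag]; ring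
    · ring
  · ext w
    simp only [Set.mem_image, Set.mem_setOf_eq]
    constructor
    · rintro ⟨u, ⟨lam, rfl⟩, rfl⟩
      refine ⟨μ lam, ?_⟩
      funext i
      simp only [sl2Apply, inv_one, Equiv.Perm.coe_one, id_eq,
        Matrix.cons_val', Matrix.cons_val_zero, Matrix.cons_val_one,
        Matrix.head_cons, Matrix.head_fin_const, Matrix.empty_val',
        Matrix.cons_val_fin_one, Matrix.of_apply]
      refine Prod.ext ?_ ?_
      · show 1 * (∑ k, lam k * Γ k i) + Γ v i * lam i = ∑ k, μ lam k * Γ' k i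
        rw [key]; ring
      · show (if i = v then (1:ZMod 2) else 0) * (∑ k, lam k * Γ k i) + 1 * lam i = μ lam i
        simp only [hμ]
        split_ifs with h
        · rw [h]
          simp only [hT]
          ring
        · ring
    · rintro ⟨m, rfl⟩
      refine ⟨fun i => ((∑ k, μ m k * Γ k i : ZMod 2), μ m i), ⟨μ m, rfl⟩, ?_⟩
      funext i
      simp only [sl2Apply, inv_one, Equiv.Perm.coe_one, id_eq,
        Matrix.cons_val', Matrix.cons_val_zero, Matrix.cons_val_one,
        Matrix.head_cons, Matrix.head_fin_const, Matrix.empty_val',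
        Matrix.cons_val_fin_one, Matrix.of_apply]
      refine Prod.ext ?_ ?_
      · show (1:ZMod 2) * (∑ k, μ m k * Γ k i) + Γ v i * μ m i = ∑ k, m k * Γ' k i
        conv_rhs => rw [← hμμ m]
        rw [key]
        ring
      · show (if i = v then (1:ZMod 2) else 0) * (∑ k, μ m k * Γ k i) + 1 * μ m i = m i
        simp only [hμ]
        split_ifs with h
        · rw [h]
          have hTm : (∑ k, μ m k * Γ k v) = T m := hTμ m
          simp only [hμ] at hTm
          rw [hTm]
          linear_combination hadd (T m)
        · ring
end

section
/- Weight shifting preserves the code: if Γ is a symmetric matrix over F_m with zero diagonal and Γ' is obtained by multiplying row v and column v of Γ by a nonzero scalar a ∈ F_m, then the additive codes over F_{m^2} generated by Γ + ωI and Γ' + ωI are equivalent under per-coordinate symplectic transformations. -/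
open scoped BigOperators

/-!
Weight shifting at `v` by `a` is the congruence `Γ' = D Γ D` with `D = diag(1, …, a, …, 1)`;
this uses that `Γ` has zero diagonal, since `Γ'_{vv}` is `a Γ_{vv}` rather than `a² Γ_{vv}`.
The codeword `(λ Γ, λ)` is sent by `diag(d_i, d_i⁻¹)` on each coordinate `i` to
`(λ Γ D, λ D⁻¹) = (μ D Γ D, μ)` with `μ = λ D⁻¹`, so these transformations map the code of `Γ`
onto the code of `D Γ D`.
-/

open Matrix

variable {F ι : Type*} [Field F] [Fintype ι] [DecidableEq ι]

def scaleSL (d : Fˣ) : SpecialLinearGroup (Fin 2) F :=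
  ⟨!![(d : F), 0; 0, (d⁻¹ : Fˣ)], by simp [det_fin_two_of]⟩

theorem sl2Apply_scaleSL (d : Fˣ) (x : F × F) :
    sl2Apply (scaleSL d) x = (d * x.1, (d⁻¹ : Fˣ) * x.2) := by
  simp [sl2Apply, scaleSL]

/-- The codeword of the additive code generated by `(Γ | I)` with coefficient vector `lam`. -/
def codeword (Γ : Matrix ι ι F) (lam : ι → F) : ι → F × F :=
  fun i => (∑ k, lam k * Γ k i, lam i)

theorem sl2Apply_scaleSL_codeword (d : ι → Fˣ) (Γ : Matrix ι ι F) (lam : ι → F) :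
    (fun i => sl2Apply (scaleSL (d i)) (codeword Γ lam i)) =
      codeword (diagonal (fun i => (d i : F)) * Γ * diagonal (fun i => (d i : F)))
        (fun k => ((d k)⁻¹ : Fˣ) * lam k) := by
  funext i
  simp only [sl2Apply_scaleSL, codeword, mul_diagonal, diagonal_mul, Prod.mk.injEq, and_true,
    Finset.mul_sum]
  refine Finset.sum_congr rfl fun k _ => ?_
  rw [Units.val_inv_eq_inv_val]
  field_simp

theorem image_range_codeword_diagonal (d : ι → Fˣ) (Γ : Matrix ι ι F) :
    (fun u : ι → F × F => fun i => sl2Apply (scaleSL (d i)) (u i)) '' Set.range (codeword Γ) =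
      Set.range
        (codeword (diagonal (fun i => (d i : F)) * Γ * diagonal (fun i => (d i : F)))) := by
  have hsurj : Function.Surjective fun (lam : ι → F) k => ((d k)⁻¹ : Fˣ) * lam k :=
    fun mu => ⟨fun k => d k * mu k, funext fun k => by simp⟩
  rw [← Set.range_comp, ← hsurj.range_comp (codeword _)]
  exact congrArg Set.range (funext (sl2Apply_scaleSL_codeword d Γ))

theorem weightShift_eq_diagonal_mul_mul_diagonal {Γ Γ' : Matrix ι ι F}
    {v : ι} {a : Fˣ} (hdiag : ∀ i, Γ i i = 0)
    (hΓ' : ∀ i j, Γ' i j = if i = v ∨ j = v then a * Γ i j else Γ i j) :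
    Γ' = diagonal (fun i => ((Pi.mulSingle v a : ι → Fˣ) i : F)) * Γ *
      diagonal (fun i => ((Pi.mulSingle v a : ι → Fˣ) i : F)) := by
  ext i j
  simp only [hΓ', mul_diagonal, diagonal_mul, Pi.mulSingle_apply, apply_ite Units.val,
    Units.val_one]
  by_cases hi : i = v <;> by_cases hj : j = v
  · subst hi hj; simp [hdiag]
  all_goals simp [hi, hj, mul_comm]

theorem stmt11_general (n : ℕ) (F : Type) [Field F]
    (v : Fin n) (a : F) (ha : a ≠ 0)
    (Γ Γ' : Matrix (Fin n) (Fin n) F) (hdiag : ∀ i, Γ i i = 0)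
    (hΓ' : ∀ i j, Γ' i j = if i = v ∨ j = v then a * Γ i j else Γ i j) :
    ∃ S : Fin n → Matrix.SpecialLinearGroup (Fin 2) F,
      (fun u : Fin n → F × F => fun i => sl2Apply (S i) (u i)) ''
          {u | ∃ lam : Fin n → F, u = fun i => ((∑ k, lam k * Γ k i : F), lam i)} =
        {u | ∃ lam : Fin n → F, u = fun i => ((∑ k, lam k * Γ' k i : F), lam i)} := by
  have hcode : ∀ Δ : Matrix (Fin n) (Fin n) F,
      {u | ∃ lam : Fin n → F, u = fun i => ((∑ k, lam k * Δ k i : F), lam i)} =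
        Set.range (codeword Δ) :=
    fun Δ => Set.ext fun _ => exists_congr fun _ => eq_comm
  let d : Fin n → Fˣ := Pi.mulSingle v (Units.mk0 a ha)
  refine ⟨fun i => scaleSL (d i), ?_⟩
  rw [hcode, hcode, image_range_codeword_diagonal,
    weightShift_eq_diagonal_mul_mul_diagonal (a := Units.mk0 a ha) hdiag hΓ']

/-- Weight shifting preserves the code: if `Γ'` is obtained from `Γ` (symmetric, zero
    diagonal, over `F_m`) by multiplying row `v` and column `v` by a nonzero `a ∈ F_m`,
    then the additive codes over `F_{m^2}` generated by `Γ + ωI` and `Γ' + ωI` (i.e. by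
    `(Γ|I)` and `(Γ'|I)`) are equivalent under per-coordinate symplectic
    transformations. -/
theorem stmt11 (n : ℕ) (F : Type) [Field F] [Fintype F]
    (v : Fin n) (a : F) (ha : a ≠ 0)
    (Γ Γ' : Matrix (Fin n) (Fin n) F) (hsym : Γ.IsSymm) (hdiag : ∀ i, Γ i i = 0)
    (hΓ' : ∀ i j, Γ' i j = if i = v ∨ j = v then a * Γ i j else Γ i j) :
    ∃ S : Fin n → Matrix.SpecialLinearGroup (Fin 2) F,
      (fun u : Fin n → F × F => fun i => sl2Apply (S i) (u i)) ''
          {u | ∃ lam : Fin n → F, u = fun i => ((∑ k, lam k * Γ k i : F), lam i)} =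
        {u | ∃ lam : Fin n → F, u = fun i => ((∑ k, lam k * Γ' k i : F), lam i)} :=
  stmt11_general n F v a ha Γ Γ' hdiag hΓ'
end

section
/- The minimum distance d of a self-dual additive code over F_{m^2} equals δ + 1, where δ is the minimum vertex degree taken over all weighted graphs in the generalized-LC orbit associated to the code. -/
/-!
Write a codeword of the graph code of `Γ` as `(lΓ, l)`. The maps `S i` and `σ` of a graph
representation preserve the zero pattern of codewords, so `d` is the least weight of a nonzero
`(lΓ, l)`. Every generalized-LC move transports graph codewords with their zero patterns (up to
the permutation), so all graphs of the orbit have the same weights; since `l = eᵥ` has weight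
`deg v + 1`, this gives `d ≤ δ + 1`.

Conversely, among the graphs of the orbit and the `l` of weight `d`, shrink the support of `l`.
If `(lΓ)_v ≠ 0` for some `v` in it, local complementation at `v` with weight `l_v / (lΓ)_v`
deletes `v` from the support without changing the zero pattern. If `lΓ` vanishes on a support of
size at least two, then a vertex `v` of it has a neighbour `w` with `(lΓ)_w = 0`: otherwise the
weight would be at least `deg v + 2 > d`. Local complementation at `w` then makes `(lΓ)_v ≠ 0`.
Once the support is a single vertex `v`, `d = deg v + 1`.
-/

open scoped BigOperators

/-- Weight shifting at vertex `u` by `a`. -/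
def wsMat {F : Type*} [Field F] {n : ℕ} (a : F) (u : Fin n)
    (Γ : Matrix (Fin n) (Fin n) F) : Matrix (Fin n) (Fin n) F :=
  Matrix.of fun i j => if i = u ∨ j = u then a * Γ i j else Γ i j

/-- Generalized local complementation at vertex `v` by `a`. -/
def glcMat {F : Type*} [Field F] {n : ℕ} (a : F) (v : Fin n)
    (Γ : Matrix (Fin n) (Fin n) F) : Matrix (Fin n) (Fin n) F :=
  Matrix.of fun i j => if i = j then 0 else Γ i j + a * Γ v i * Γ v j

/-- Relabelling of vertices by a permutation. -/
def permMat {F : Type*} [Field F] {n : ℕ} (σ : Equiv.Perm (Fin n))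
    (Γ : Matrix (Fin n) (Fin n) F) : Matrix (Fin n) (Fin n) F :=
  Matrix.of fun i j => Γ (σ i) (σ j)

/-- One step of the generalized-LC orbit: a weight shift, a generalized local
    complementation, or a graph isomorphism (vertex permutation). -/
def lcStep {F : Type*} [Field F] {n : ℕ}
    (Γ Γ' : Matrix (Fin n) (Fin n) F) : Prop :=
  (∃ a : F, a ≠ 0 ∧ ∃ u, Γ' = wsMat a u Γ) ∨
  (∃ a : F, a ≠ 0 ∧ ∃ v, Γ' = glcMat a v Γ) ∨
  (∃ σ : Equiv.Perm (Fin n), Γ' = permMat σ Γ)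

open Finset Function Relation

section Hamming

variable {ι : Type*} [Fintype ι]

theorem hammingNorm_eq_of_forall_eq_zero_iff {β γ : ι → Type*} [∀ i, Zero (β i)]
    [∀ i, Zero (γ i)] [∀ i, DecidableEq (β i)] [∀ i, DecidableEq (γ i)]
    {x : ∀ i, β i} {y : ∀ i, γ i} (h : ∀ i, x i = 0 ↔ y i = 0) :
    hammingNorm x = hammingNorm y :=
  congrArg card (filter_congr fun i _ => not_congr (h i))

theorem hammingNorm_comp_perm {β : Type*} [Zero β] [DecidableEq β] (x : ι → β)
    (σ : Equiv.Perm ι) : hammingNorm (x ∘ σ) = hammingNorm x :=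
  card_equiv σ fun i => by simp

theorem hammingNorm_update_zero_lt {β : Type*} [Zero β] [DecidableEq β] [DecidableEq ι]
    {x : ι → β} {v : ι} (hv : x v ≠ 0) : hammingNorm (update x v 0) < hammingNorm x := by
  refine card_lt_card ⟨fun i hi => ?_, fun h => ?_⟩
  · by_cases hiv : i = v
    · simp_all
    · simpa [hiv] using hi
  · simpa using h (mem_filter.2 ⟨mem_univ v, hv⟩)

theorem exists_eq_single_of_hammingNorm_eq_one {β : Type*} [Zero β] [DecidableEq β]
    [DecidableEq ι] {x : ι → β} (hx : hammingNorm x = 1) : ∃ v, x = Pi.single v (x v) := by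
  obtain ⟨v, hv⟩ := card_eq_one.mp hx
  refine ⟨v, funext fun i => ?_⟩
  by_cases hiv : i = v
  · subst hiv; simp
  · simpa [hiv] using Finset.ext_iff.mp hv i

end Hamming

theorem sum_update_mul_update {ι R : Type*} [Fintype ι] [DecidableEq ι] [CommRing R]
    (f g : ι → R) (v : ι) (a b : R) :
    ∑ k, update f v a k * update g v b k = ∑ k, f k * g k + (a * b - f v * g v) := by
  rw [← sum_erase_add _ _ (mem_univ v), ← sum_erase_add _ _ (mem_univ v), update_self,
    update_self, sum_congr rfl fun k hk => by
      rw [update_of_ne (ne_of_mem_erase hk), update_of_ne (ne_of_mem_erase hk)]]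
  ring

theorem sum_update_mul {ι R : Type*} [Fintype ι] [DecidableEq ι] [CommRing R]
    (f g : ι → R) (v : ι) (a : R) :
    ∑ k, update f v a k * g k = ∑ k, f k * g k + (a - f v) * g v := by
  simpa [sub_mul] using sum_update_mul_update f g v a (g v)

variable {F : Type*} [Field F] {n : ℕ}

-- The codeword `∑ k, l k • (row k of Γ + ωI)`, a pair `(x, y)` standing for `x + ωy`.
def graphCodeword (Γ : Matrix (Fin n) (Fin n) F) (l : Fin n → F) : Fin n → F × F :=
  fun i => (∑ k, l k * Γ k i, l i)

def IsWeightedAdjMatrix (Γ : Matrix (Fin n) (Fin n) F) : Prop :=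
  Γ.IsSymm ∧ ∀ i, Γ i i = 0

theorem graphCodeword_apply_eq_zero_iff {Γ : Matrix (Fin n) (Fin n) F} {l : Fin n → F}
    {i : Fin n} : graphCodeword Γ l i = 0 ↔ ∑ k, l k * Γ k i = 0 ∧ l i = 0 :=
  Prod.mk_eq_zero

theorem graphCodeword_permMat (σ : Equiv.Perm (Fin n)) (Γ : Matrix (Fin n) (Fin n) F)
    (l : Fin n → F) : graphCodeword (permMat σ Γ) (l ∘ σ) = graphCodeword Γ l ∘ σ := by
  ext i
  · exact Equiv.sum_comp σ fun k => l k * Γ k (σ i)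
  · rfl

theorem sl2Apply_eq_zero_iff (M : Matrix.SpecialLinearGroup (Fin 2) F) (x : F × F) :
    sl2Apply M x = 0 ↔ x = 0 := by
  refine ⟨fun h => ?_, fun h => by simp [h, sl2Apply]⟩
  have hdet : M.1 0 0 * M.1 1 1 - M.1 0 1 * M.1 1 0 = 1 := by
    rw [← Matrix.det_fin_two]
    exact M.2
  obtain ⟨h1, h2⟩ := Prod.mk_eq_zero.mp h
  have hx1 : x.1 = 0 := by linear_combination M.1 1 1 * h1 - M.1 0 1 * h2 - x.1 * hdet
  have hx2 : x.2 = 0 := by linear_combination -M.1 1 0 * h1 + M.1 0 0 * h2 - x.2 * hdet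
  exact Prod.ext hx1 hx2

namespace IsWeightedAdjMatrix

variable {Γ : Matrix (Fin n) (Fin n) F} (hΓ : IsWeightedAdjMatrix Γ)
include hΓ

theorem sum_mul_glcMat (a : F) (v : Fin n) (l : Fin n → F) (i : Fin n) :
    ∑ k, l k * glcMat a v Γ k i
      = ∑ k, l k * Γ k i + a * Γ v i * ∑ k, l k * Γ k v - a * l i * Γ v i ^ 2 := by
  have hterm : ∀ k, l k * glcMat a v Γ k i = l k * Γ k i + a * Γ v i * (l k * Γ k v)
      - if k = i then a * l i * Γ v i ^ 2 else 0 := by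
    intro k
    rw [← hΓ.1.apply k v]
    by_cases hk : k = i
    · subst hk; simp [glcMat, hΓ.2]; ring
    · simp [glcMat, hk]; ring
  simp only [hterm, sum_sub_distrib, sum_add_distrib, ← mul_sum, sum_ite_eq', mem_univ, if_true]

theorem graphCodeword_glcMat_eq_zero_iff (a : F) (v : Fin n) (l : Fin n → F) (i : Fin n) :
    graphCodeword (glcMat a v Γ) (update l v (l v - a * ∑ k, l k * Γ k v)) i = 0
      ↔ graphCodeword Γ l i = 0 := by
  set l' := update l v (l v - a * ∑ k, l k * Γ k v)
  have hx : ∑ k, l' k * glcMat a v Γ k i = ∑ k, l k * Γ k i - a * l' i * Γ v i ^ 2 := by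
    rw [hΓ.sum_mul_glcMat, sum_update_mul, sum_update_mul, hΓ.2 v]
    ring
  rw [graphCodeword_apply_eq_zero_iff, graphCodeword_apply_eq_zero_iff, hx]
  by_cases hiv : i = v
  · subst hiv
    simp only [l', update_self, hΓ.2 i]
    constructor <;> rintro ⟨h1, h2⟩ <;> simp_all
  · simp only [l', update_of_ne hiv]
    constructor <;> rintro ⟨h1, h2⟩ <;> simp_all

theorem graphCodeword_wsMat_eq_zero_iff {a : F} (ha : a ≠ 0) (u : Fin n) (l : Fin n → F)
    (i : Fin n) :
    graphCodeword (wsMat a u Γ) (update l u (a⁻¹ * l u)) i = 0 ↔ graphCodeword Γ l i = 0 := by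
  rw [graphCodeword_apply_eq_zero_iff, graphCodeword_apply_eq_zero_iff]
  by_cases hiu : i = u
  · subst hiu
    have hcol : ∀ k, wsMat a i Γ k i = a * Γ k i := by simp [wsMat]
    rw [sum_update_mul, update_self]
    simp [hcol, hΓ.2, mul_left_comm _ a, ← mul_sum, ha]
  · have hcol : ∀ k, wsMat a u Γ k i = update (fun k => Γ k i) u (a * Γ u i) k := fun k => by
      by_cases hk : k = u
      · subst hk; simp [wsMat]
      · simp [wsMat, hk, hiu]
    simp only [hcol, sum_update_mul_update, update_of_ne hiu]
    rw [mul_mul_mul_comm, inv_mul_cancel₀ ha, one_mul, sub_self, add_zero]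

theorem of_lcStep {Γ' : Matrix (Fin n) (Fin n) F} (h : lcStep Γ Γ') :
    IsWeightedAdjMatrix Γ' := by
  obtain ⟨a, -, u, rfl⟩ | ⟨a, -, v, rfl⟩ | ⟨σ, rfl⟩ := h
  · refine ⟨Matrix.IsSymm.ext fun i j => ?_, fun i => by simp [wsMat, hΓ.2]⟩
    simp only [wsMat, Matrix.of_apply, or_comm (a := i = u), hΓ.1.apply]
  · refine ⟨Matrix.IsSymm.ext fun i j => ?_, fun i => by simp [glcMat]⟩
    simp only [glcMat, Matrix.of_apply, eq_comm (a := i), hΓ.1.apply]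
    ring_nf
  · exact ⟨Matrix.IsSymm.ext fun i j => hΓ.1.apply _ _, fun i => hΓ.2 _⟩

theorem lcStep_symm {Γ' : Matrix (Fin n) (Fin n) F} (h : lcStep Γ Γ') : lcStep Γ' Γ := by
  obtain ⟨a, ha, u, rfl⟩ | ⟨a, ha, v, rfl⟩ | ⟨σ, rfl⟩ := h
  · refine Or.inl ⟨a⁻¹, inv_ne_zero ha, u, ?_⟩
    ext i j
    by_cases hc : i = u ∨ j = u <;> simp [wsMat, hc, ha]
  · refine Or.inr (Or.inl ⟨-a, neg_ne_zero.mpr ha, v, ?_⟩)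
    have hrow : ∀ i, glcMat a v Γ v i = Γ v i := fun i => by
      by_cases hvi : v = i
      · subst hvi; simp [glcMat, hΓ.2]
      · simp [glcMat, hvi, hΓ.2]
    ext i j
    by_cases hij : i = j
    · subst hij; simp [glcMat, hΓ.2]
    · rw [glcMat, Matrix.of_apply, if_neg hij, hrow, hrow]
      simp [glcMat, hij]
  · exact Or.inr (Or.inr ⟨σ⁻¹, by ext i j; simp [permMat]⟩)

end IsWeightedAdjMatrix

theorem IsWeightedAdjMatrix.of_reflTransGen {Γ₀ Γ : Matrix (Fin n) (Fin n) F}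
    (hΓ₀ : IsWeightedAdjMatrix Γ₀) (h : ReflTransGen lcStep Γ₀ Γ) : IsWeightedAdjMatrix Γ := by
  induction h with
  | refl => exact hΓ₀
  | tail _ hstep hΓ => exact hΓ.of_lcStep hstep

variable [DecidableEq F]

def vertexDegree (Γ : Matrix (Fin n) (Fin n) F) (v : Fin n) : ℕ :=
  (univ.filter fun j => j ≠ v ∧ Γ v j ≠ 0).card

theorem hammingNorm_graphCodeword_eq_zero_iff {Γ : Matrix (Fin n) (Fin n) F}
    {l : Fin n → F} : hammingNorm (graphCodeword Γ l) = 0 ↔ l = 0 := by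
  simp only [hammingNorm_eq_zero, funext_iff, graphCodeword_apply_eq_zero_iff, Pi.zero_apply]
  exact ⟨fun h i => (h i).2, fun h i => ⟨by simp [h], h i⟩⟩

theorem hammingNorm_graphCodeword_single (Γ : Matrix (Fin n) (Fin n) F) (v : Fin n) {c : F}
    (hc : c ≠ 0) : hammingNorm (graphCodeword Γ (Pi.single v c)) = vertexDegree Γ v + 1 := by
  have hsum : ∀ i, ∑ k, (Pi.single v c : Fin n → F) k * Γ k i = c * Γ v i := fun i => by
    simp [Pi.single_apply, ite_mul]
  rw [hammingNorm, vertexDegree, ← card_insert_of_notMem (s := univ.filter _) (a := v) (by simp)]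
  congr 1
  ext i
  by_cases hiv : i = v
  · subst hiv; simp [graphCodeword, hc]
  · simp [graphCodeword, hsum, hiv, hc]

def graphCodeWeights (Γ : Matrix (Fin n) (Fin n) F) : Set ℕ :=
  Set.range fun l => hammingNorm (graphCodeword Γ l)

theorem vertexDegree_add_hammingNorm_le {Γ : Matrix (Fin n) (Fin n) F} {l : Fin n → F}
    {v : Fin n} (hS : ∀ i, l i ≠ 0 → ∑ k, l k * Γ k i = 0)
    (hN : ∀ w, w ≠ v → Γ v w ≠ 0 → ∑ k, l k * Γ k w ≠ 0) :
    vertexDegree Γ v + hammingNorm l ≤ hammingNorm (graphCodeword Γ l) := by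
  rw [vertexDegree, hammingNorm, hammingNorm, ← card_union_of_disjoint]
  · refine card_le_card fun i hi => ?_
    simp only [mem_union, mem_filter, mem_univ, true_and, ne_eq, graphCodeword_apply_eq_zero_iff,
      not_and_or] at hi ⊢
    rcases hi with ⟨hiv, hΓi⟩ | hi
    · exact .inl (hN i hiv hΓi)
    · exact .inr hi
  · exact disjoint_filter.mpr fun i _ ⟨hiv, hΓi⟩ hli => hN i hiv hΓi (hS i hli)

namespace IsWeightedAdjMatrix

variable {Γ₀ Γ : Matrix (Fin n) (Fin n) F}

theorem graphCodeWeights_subset_of_lcStep (hΓ : IsWeightedAdjMatrix Γ)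
    {Γ' : Matrix (Fin n) (Fin n) F} (h : lcStep Γ Γ') :
    graphCodeWeights Γ ⊆ graphCodeWeights Γ' := by
  rintro _ ⟨l, rfl⟩
  obtain ⟨a, ha, u, rfl⟩ | ⟨a, -, v, rfl⟩ | ⟨σ, rfl⟩ := h
  · exact ⟨_, hammingNorm_eq_of_forall_eq_zero_iff (hΓ.graphCodeword_wsMat_eq_zero_iff ha u l)⟩
  · exact ⟨_, hammingNorm_eq_of_forall_eq_zero_iff (hΓ.graphCodeword_glcMat_eq_zero_iff a v l)⟩
  · exact ⟨l ∘ σ, (congrArg hammingNorm (graphCodeword_permMat σ Γ l)).trans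
      (hammingNorm_comp_perm _ σ)⟩

theorem graphCodeWeights_eq_of_reflTransGen (hΓ₀ : IsWeightedAdjMatrix Γ₀)
    (h : ReflTransGen lcStep Γ₀ Γ) : graphCodeWeights Γ = graphCodeWeights Γ₀ := by
  induction h with
  | refl => rfl
  | tail hprev hstep ih =>
    have hΓ := hΓ₀.of_reflTransGen hprev
    rw [← ih]
    exact ((hΓ.of_lcStep hstep).graphCodeWeights_subset_of_lcStep (hΓ.lcStep_symm hstep)).antisymm
      (hΓ.graphCodeWeights_subset_of_lcStep hstep)

theorem exists_hammingNorm_eq_vertexDegree_add_one (hΓ₀ : IsWeightedAdjMatrix Γ₀)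
    (h : ReflTransGen lcStep Γ₀ Γ) (v : Fin n) :
    ∃ l, l ≠ 0 ∧ hammingNorm (graphCodeword Γ₀ l) = vertexDegree Γ v + 1 := by
  obtain ⟨l, hl⟩ : vertexDegree Γ v + 1 ∈ graphCodeWeights Γ₀ := by
    rw [← hΓ₀.graphCodeWeights_eq_of_reflTransGen h]
    exact ⟨_, hammingNorm_graphCodeword_single Γ v one_ne_zero⟩
  refine ⟨l, fun hl0 => ?_, hl⟩
  simp only at hl
  rw [hammingNorm_graphCodeword_eq_zero_iff.mpr hl0] at hl
  omega

theorem exists_lcStep_hammingNorm_update_zero (hΓ : IsWeightedAdjMatrix Γ) {l : Fin n → F}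
    {v : Fin n} (hv : l v ≠ 0) (hx : ∑ k, l k * Γ k v ≠ 0) :
    ∃ Γ', lcStep Γ Γ' ∧
      hammingNorm (graphCodeword Γ' (update l v 0)) = hammingNorm (graphCodeword Γ l) := by
  refine ⟨glcMat (l v / ∑ k, l k * Γ k v) v Γ, Or.inr (Or.inl ⟨_, div_ne_zero hv hx, v, rfl⟩), ?_⟩
  have h := hammingNorm_eq_of_forall_eq_zero_iff
    (hΓ.graphCodeword_glcMat_eq_zero_iff (l v / ∑ k, l k * Γ k v) v l)
  rwa [div_mul_cancel₀ _ hx, sub_self] at h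

theorem exists_reflTransGen_sum_mul_ne_zero (hΓ : IsWeightedAdjMatrix Γ) {l : Fin n → F}
    (hl : 2 ≤ hammingNorm l)
    (hmin : ∀ v, hammingNorm (graphCodeword Γ l) ≤ vertexDegree Γ v + 1) :
    ∃ Γ', ReflTransGen lcStep Γ Γ' ∧
      hammingNorm (graphCodeword Γ' l) = hammingNorm (graphCodeword Γ l) ∧
      ∃ v, l v ≠ 0 ∧ ∑ k, l k * Γ' k v ≠ 0 := by
  by_cases hS : ∃ v, l v ≠ 0 ∧ ∑ k, l k * Γ k v ≠ 0
  · exact ⟨Γ, .refl, rfl, hS⟩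
  push Not at hS
  obtain ⟨v, hv⟩ : ∃ v, l v ≠ 0 := by
    by_contra! h
    rw [show l = 0 from funext h, hammingNorm_zero] at hl
    omega
  by_cases hN : ∃ w, w ≠ v ∧ Γ v w ≠ 0 ∧ ∑ k, l k * Γ k w = 0
  · obtain ⟨w, hwv, hvw, hxw⟩ := hN
    -- Complementing at `w` with weight 1 keeps the codeword of `l` in place since `(lΓ)_w = 0`,
    -- and turns `(lΓ)_v` into `-l_v Γ_vw² ≠ 0`.
    refine ⟨glcMat 1 w Γ, .single (Or.inr (Or.inl ⟨1, one_ne_zero, w, rfl⟩)), ?_, v, hv, ?_⟩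
    · have h := hammingNorm_eq_of_forall_eq_zero_iff (hΓ.graphCodeword_glcMat_eq_zero_iff 1 w l)
      rwa [hxw, mul_zero, sub_zero, update_eq_self] at h
    · rw [hΓ.sum_mul_glcMat, hS v hv, hxw, hΓ.1.apply v w]
      simpa using ⟨hv, hvw⟩
  · push Not at hN
    have := vertexDegree_add_hammingNorm_le hS hN
    have := hmin v
    omega

theorem exists_reflTransGen_hammingNorm_lt (hΓ : IsWeightedAdjMatrix Γ) {l : Fin n → F}
    (hl : 2 ≤ hammingNorm l)
    (hmin : ∀ v, hammingNorm (graphCodeword Γ l) ≤ vertexDegree Γ v + 1) :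
    ∃ Γ' l', ReflTransGen lcStep Γ Γ' ∧ hammingNorm l' < hammingNorm l ∧
      hammingNorm (graphCodeword Γ' l') = hammingNorm (graphCodeword Γ l) := by
  obtain ⟨Γ₁, h₁, hw₁, v, hv, hx⟩ := hΓ.exists_reflTransGen_sum_mul_ne_zero hl hmin
  obtain ⟨Γ₂, h₂, hw₂⟩ := (hΓ.of_reflTransGen h₁).exists_lcStep_hammingNorm_update_zero hv hx
  exact ⟨Γ₂, update l v 0, h₁.tail h₂, hammingNorm_update_zero_lt hv, hw₂.trans hw₁⟩

theorem exists_vertexDegree_add_one_eq (hΓ₀ : IsWeightedAdjMatrix Γ₀) {D : ℕ}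
    (hmin : ∀ Γ, ReflTransGen lcStep Γ₀ Γ → ∀ v, D ≤ vertexDegree Γ v + 1)
    (hΓ : ReflTransGen lcStep Γ₀ Γ) {l : Fin n → F} (hl : l ≠ 0)
    (hD : hammingNorm (graphCodeword Γ l) = D) :
    ∃ Γ', ReflTransGen lcStep Γ₀ Γ' ∧ ∃ v, vertexDegree Γ' v + 1 = D := by
  induction hs : hammingNorm l using Nat.strong_induction_on generalizing Γ l with
  | _ s ih =>
  obtain hs1 | hs2 : s = 1 ∨ 2 ≤ s := by
    have := hammingNorm_pos_iff.mpr hl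
    omega
  · obtain ⟨v, hv⟩ := exists_eq_single_of_hammingNorm_eq_one (hs.trans hs1)
    have hlv : l v ≠ 0 := fun h => hl (hv.trans (by simp [h]))
    refine ⟨Γ, hΓ, v, ?_⟩
    rw [← hD, hv, hammingNorm_graphCodeword_single Γ v hlv]
  · obtain ⟨Γ', l', hΓΓ', hlt, hw⟩ :=
      (hΓ₀.of_reflTransGen hΓ).exists_reflTransGen_hammingNorm_lt (hs ▸ hs2) (hD ▸ hmin Γ hΓ)
    have hl' : l' ≠ 0 := by
      rw [Ne, ← hammingNorm_graphCodeword_eq_zero_iff (Γ := Γ'), hw,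
        hammingNorm_graphCodeword_eq_zero_iff]
      exact hl
    exact ih _ (hs ▸ hlt) (hΓ.trans hΓΓ') hl' (hw.trans hD) rfl

theorem sInf_vertexDegree_add_one_eq [NeZero n] (hΓ₀ : IsWeightedAdjMatrix Γ₀) :
    sInf {k | ∃ Γ, ReflTransGen lcStep Γ₀ Γ ∧ ∃ v, vertexDegree Γ v = k} + 1 =
      sInf {w | ∃ l, l ≠ 0 ∧ hammingNorm (graphCodeword Γ₀ l) = w} := by
  set D := sInf {w | ∃ l, l ≠ 0 ∧ hammingNorm (graphCodeword Γ₀ l) = w}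
  have hmin : ∀ Γ, ReflTransGen lcStep Γ₀ Γ → ∀ v, D ≤ vertexDegree Γ v + 1 := fun Γ h v =>
    Nat.sInf_le (hΓ₀.exists_hammingNorm_eq_vertexDegree_add_one h v)
  obtain ⟨l, hl, hD⟩ : D ∈ {w | ∃ l, l ≠ 0 ∧ hammingNorm (graphCodeword Γ₀ l) = w} :=
    Nat.sInf_mem ⟨_, hΓ₀.exists_hammingNorm_eq_vertexDegree_add_one .refl 0⟩
  obtain ⟨Γ, hΓ, v, hv⟩ := hΓ₀.exists_vertexDegree_add_one_eq hmin .refl hl hD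
  have hleast : IsLeast {k | ∃ Γ, ReflTransGen lcStep Γ₀ Γ ∧ ∃ v, vertexDegree Γ v = k}
      (D - 1) := by
    refine ⟨⟨Γ, hΓ, v, by omega⟩, ?_⟩
    rintro _ ⟨Γ', h', v', rfl⟩
    have := hmin Γ' h' v'
    omega
  rw [hleast.csInf_eq]
  omega

end IsWeightedAdjMatrix

theorem hammingNorm_sl2Apply_comp_perm (S : Fin n → Matrix.SpecialLinearGroup (Fin 2) F)
    (σ : Equiv.Perm (Fin n)) (c : Fin n → F × F) :
    hammingNorm (fun i => sl2Apply (S i) (c (σ⁻¹ i))) = hammingNorm c :=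
  (hammingNorm_eq_of_forall_eq_zero_iff fun i => sl2Apply_eq_zero_iff (S i) _).trans
    (hammingNorm_comp_perm c σ⁻¹)

theorem setOf_hammingNorm_eq_of_graph_representation {C : Set (Fin n → F × F)}
    {Γ : Matrix (Fin n) (Fin n) F} (σ : Equiv.Perm (Fin n))
    (S : Fin n → Matrix.SpecialLinearGroup (Fin 2) F)
    (hrep : ∀ u, (∃ c ∈ C, (fun i => sl2Apply (S i) (c (σ⁻¹ i))) = u) ↔
      ∃ l, u = graphCodeword Γ l) :
    {w | ∃ c ∈ C, c ≠ 0 ∧ hammingNorm c = w} =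
      {w | ∃ l, l ≠ 0 ∧ hammingNorm (graphCodeword Γ l) = w} := by
  ext w
  constructor
  · rintro ⟨c, hc, hc0, rfl⟩
    obtain ⟨l, hl⟩ := (hrep _).mp ⟨c, hc, rfl⟩
    have hw : hammingNorm (graphCodeword Γ l) = hammingNorm c := by
      rw [← hl, hammingNorm_sl2Apply_comp_perm]
    exact ⟨l, hammingNorm_graphCodeword_eq_zero_iff.not.mp
      (hw ▸ hammingNorm_ne_zero_iff.mpr hc0), hw⟩
  · rintro ⟨l, hl0, rfl⟩
    obtain ⟨c, hc, hcl⟩ := (hrep _).mpr ⟨l, rfl⟩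
    have hw : hammingNorm c = hammingNorm (graphCodeword Γ l) := by
      rw [← hcl, hammingNorm_sl2Apply_comp_perm]
    exact ⟨c, hc, hammingNorm_ne_zero_iff.mp
      (hw ▸ hammingNorm_graphCodeword_eq_zero_iff.not.mpr hl0), hw⟩

theorem stmt12_general (n : ℕ) (hn : 0 < n)
    (F : Type) [Field F] [DecidableEq F]
    (C : Submodule F (Fin n → F × F))
    (Γ₀ : Matrix (Fin n) (Fin n) F) (hsym : Γ₀.IsSymm) (hdiag : ∀ i, Γ₀ i i = 0)
    (hrep : ∃ (σ : Equiv.Perm (Fin n)) (S : Fin n → Matrix.SpecialLinearGroup (Fin 2) F),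
      ∀ u : Fin n → F × F,
        (∃ c ∈ C, (fun i => sl2Apply (S i) (c (σ⁻¹ i))) = u) ↔
        ∃ lam : Fin n → F, u = fun i => ((∑ k, lam k * Γ₀ k i : F), lam i)) :
    sInf {w : ℕ | ∃ c ∈ C, c ≠ 0 ∧
        (Finset.univ.filter fun i => c i ≠ (0 : F × F)).card = w} =
      sInf {k : ℕ | ∃ Γ : Matrix (Fin n) (Fin n) F, Relation.ReflTransGen lcStep Γ₀ Γ ∧
        ∃ v : Fin n, (Finset.univ.filter fun j => j ≠ v ∧ Γ v j ≠ 0).card = k} + 1 := by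
  have : NeZero n := ⟨hn.ne'⟩
  obtain ⟨σ, S, hrep⟩ := hrep
  have key := (IsWeightedAdjMatrix.sInf_vertexDegree_add_one_eq (Γ₀ := Γ₀) ⟨hsym, hdiag⟩).symm
  rw [← setOf_hammingNorm_eq_of_graph_representation (C := C) σ S hrep] at key
  exact key

/-- The minimum distance `d` of a self-dual additive code over `F_{m^2}` equals
    `δ + 1`, where `δ` is the minimum vertex degree over all weighted graphs in the
    generalized-LC orbit associated to the code (via any graph representation `Γ₀`
    of the code). -/
theorem stmt12 (p r n m : ℕ) (hp : p.Prime) (hr : 0 < r) (hm : m = p ^ r) (hn : 0 < n)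
    (F : Type) [Field F] [Fintype F] [DecidableEq F] (hF : Fintype.card F = m)
    (C : Submodule F (Fin n → F × F))
    (hsd : ∀ u, u ∈ C ↔ ∀ c ∈ C, sympForm p r u c = 0)
    (Γ₀ : Matrix (Fin n) (Fin n) F) (hsym : Γ₀.IsSymm) (hdiag : ∀ i, Γ₀ i i = 0)
    (hrep : ∃ (σ : Equiv.Perm (Fin n)) (S : Fin n → Matrix.SpecialLinearGroup (Fin 2) F),
      ∀ u : Fin n → F × F,
        (∃ c ∈ C, (fun i => sl2Apply (S i) (c (σ⁻¹ i))) = u) ↔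
        ∃ lam : Fin n → F, u = fun i => ((∑ k, lam k * Γ₀ k i : F), lam i)) :
    sInf {w : ℕ | ∃ c ∈ C, c ≠ 0 ∧
        (Finset.univ.filter fun i => c i ≠ (0 : F × F)).card = w} =
      sInf {k : ℕ | ∃ Γ : Matrix (Fin n) (Fin n) F, Relation.ReflTransGen lcStep Γ₀ Γ ∧
        ∃ v : Fin n, (Finset.univ.filter fun j => j ≠ v ∧ Γ v j ≠ 0).card = k} + 1 :=
  stmt12_general n hn F C Γ₀ hsym hdiag hrep
end

section
/- The circulant graph code over F_9 of length 6 whose generator matrix is the circulant matrix with first row (ω, 0, 1, 1, 1, 0) is a self-dual additive (6, 3^6, 4) MDS code with weight enumerator W(1,y) = 1 + 120 y^4 + 240 y^5 + 368 y^6. -/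
open scoped BigOperators

/-- The Hermitian trace inner product on `F_9^n` (`m = 3`, `p = 3`, `r = 1`, so the trace
    `Tr_{3/3}` is the identity): `u * v = (u · v³ - u³ · v)/(ω - ω³)`. -/
noncomputable def hermForm9 (ω : GaloisField 3 2) {n : ℕ} (u v : Fin n → GaloisField 3 2) :
    GaloisField 3 2 :=
  (((∑ j, u j * v j ^ 3) - ∑ j, u j ^ 3 * v j) / (ω - ω ^ 3))

/-!
Write vectors of `𝔽₉⁶` as `x + y ω` with `x, y ∈ 𝔽₃⁶`. The `𝔽₃`-span of the rows of `ω I + A`,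
with `A` the symmetric circulant adjacency matrix with first row `(0, 0, 1, 1, 1, 0)`, is then
`{A a + a ω}`, and the Hermitian trace form becomes the symplectic form `y ⬝ x' - x ⬝ y'`.
Symmetry of `A` makes the code self-orthogonal, and a vector `x + y ω` orthogonal to every
codeword has `x = A y`, so the code is self-dual. The map `a ↦ A a + a ω` is injective, which
gives `3⁶` codewords, and the weight distribution is a finite enumeration of the symplectic
weights of the pairs `(A a | a)`.
-/

open Matrix Function

section Coordinates

lemma notMem_range_algebraMap_of_forall_exists_pow_eq {F K : Type*} [CommSemiring F] [Semiring K]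
    [Algebra F K] [Finite F] {ω : K} (hω : ∀ x : K, x ≠ 0 → ∃ k : ℕ, ω ^ k = x)
    (hcard : Nat.card F < Nat.card K) : ω ∉ Set.range (algebraMap F K) := by
  rintro ⟨r, rfl⟩
  have hsurj : Surjective (algebraMap F K) := by
    intro x
    by_cases hx : x = 0
    · exact ⟨0, by rw [hx, map_zero]⟩
    · obtain ⟨k, rfl⟩ := hω x hx
      exact ⟨r ^ k, map_pow _ _ _⟩
  exact hcard.not_ge (Nat.card_le_card_of_surjective _ hsurj)

variable {F K : Type*} [Field F] [CommRing K] [Nontrivial K] [Algebra F K] {ω : K}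

lemma algebraMap_add_algebraMap_mul_eq_zero_iff (hω : ω ∉ Set.range (algebraMap F K))
    {s t : F} : algebraMap F K s + algebraMap F K t * ω = 0 ↔ s = 0 ∧ t = 0 := by
  refine ⟨fun h => ?_, fun ⟨hs, ht⟩ => by simp [hs, ht]⟩
  obtain rfl : t = 0 := by
    by_contra ht
    refine hω ⟨-(t⁻¹ * s), ?_⟩
    have h' := congrArg (algebraMap F K t⁻¹ * ·) h
    simp only [mul_add, ← mul_assoc, ← map_mul, inv_mul_cancel₀ ht, map_one, one_mul,
      mul_zero] at h'
    rw [map_neg, neg_eq_of_add_eq_zero_right h']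
  simpa using h

lemma algebraMap_add_algebraMap_mul_injective (hω : ω ∉ Set.range (algebraMap F K)) :
    Injective fun p : F × F => algebraMap F K p.1 + algebraMap F K p.2 * ω := by
  rintro ⟨s, t⟩ ⟨s', t'⟩ h
  have h0 : algebraMap F K (s - s') + algebraMap F K (t - t') * ω = 0 := by
    simp only [map_sub] at h ⊢
    linear_combination h
  obtain ⟨hs, ht⟩ := (algebraMap_add_algebraMap_mul_eq_zero_iff hω).1 h0
  rw [sub_eq_zero.1 hs, sub_eq_zero.1 ht]

variable {ι : Type*}

def ofPair (ω : K) (x y : ι → F) : ι → K :=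
  fun j => algebraMap F K (x j) + algebraMap F K (y j) * ω

def symplecticWeight [Fintype ι] [DecidableEq F] (x y : ι → F) : ℕ :=
  (Finset.univ.filter fun j => x j ≠ 0 ∨ y j ≠ 0).card

lemma ofPair_inj (hω : ω ∉ Set.range (algebraMap F K)) {x y x' y' : ι → F} :
    ofPair ω x y = ofPair ω x' y' ↔ x = x' ∧ y = y' := by
  refine ⟨fun h => ?_, fun ⟨hx, hy⟩ => hx ▸ hy ▸ rfl⟩
  have hj : ∀ j, (x j, y j) = (x' j, y' j) := fun j =>
    algebraMap_add_algebraMap_mul_injective hω (congrFun h j)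
  exact ⟨funext fun j => (Prod.ext_iff.1 (hj j)).1, funext fun j => (Prod.ext_iff.1 (hj j)).2⟩

lemma exists_ofPair_eq [Finite K] (hω : ω ∉ Set.range (algebraMap F K))
    (hcard : Nat.card K = Nat.card F ^ 2) (u : ι → K) : ∃ x y : ι → F, ofPair ω x y = u := by
  have hbij := (algebraMap_add_algebraMap_mul_injective hω).bijective_of_nat_card_le
    (by rw [Nat.card_prod, hcard, sq])
  choose p hp using fun j => hbij.2 (u j)
  exact ⟨fun j => (p j).1, fun j => (p j).2, funext hp⟩

lemma card_filter_ofPair_ne_zero [Fintype ι] [DecidableEq F] [DecidableEq K]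
    (hω : ω ∉ Set.range (algebraMap F K)) (x y : ι → F) :
    (Finset.univ.filter fun j => ofPair ω x y j ≠ 0).card = symplecticWeight x y := by
  unfold symplecticWeight ofPair
  congr 1
  refine Finset.filter_congr fun j _ => ?_
  rw [ne_eq, algebraMap_add_algebraMap_mul_eq_zero_iff hω]
  tauto

end Coordinates

lemma algebraMap_add_algebraMap_mul_pow_char {p : ℕ} [Fact p.Prime] {K : Type*} [CommRing K]
    [Algebra (ZMod p) K] [CharP K p] (ω : K) (s t : ZMod p) :
    (algebraMap (ZMod p) K s + algebraMap (ZMod p) K t * ω) ^ p =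
      algebraMap (ZMod p) K s + algebraMap (ZMod p) K t * ω ^ p := by
  rw [add_pow_char, mul_pow, ← map_pow, ← map_pow, ZMod.pow_card, ZMod.pow_card]

lemma pow_three_ne_self {K : Type*} [CommRing K] [IsDomain K] [Algebra (ZMod 3) K] {ω : K}
    (hω : ω ∉ Set.range (algebraMap (ZMod 3) K)) : ω ^ 3 ≠ ω := by
  intro h
  have hfac : ω * ((ω - 1) * (ω + 1)) = 0 := by linear_combination h
  rcases mul_eq_zero.1 hfac with h0 | h1
  · exact hω ⟨0, by rw [map_zero, h0]⟩
  rcases mul_eq_zero.1 h1 with h1 | h1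
  · exact hω ⟨1, by rw [map_one, sub_eq_zero.1 h1]⟩
  · exact hω ⟨-1, by rw [map_neg, map_one, eq_neg_of_add_eq_zero_left h1]⟩

/-- Cubing fixes `𝔽₃`, so the cross terms collect to `(y x' - x y') (ω - ω³)`. -/
lemma hermForm9_ofPair {n : ℕ} {ω : GaloisField 3 2}
    (hω : ω ∉ Set.range (algebraMap (ZMod 3) (GaloisField 3 2))) (x y x' y' : Fin n → ZMod 3) :
    hermForm9 ω (ofPair ω x y) (ofPair ω x' y') =
      algebraMap (ZMod 3) (GaloisField 3 2) (y ⬝ᵥ x' - x ⬝ᵥ y') := by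
  have hne : ω - ω ^ 3 ≠ 0 := sub_ne_zero.2 (pow_three_ne_self hω).symm
  rw [hermForm9, ← Finset.sum_sub_distrib, div_eq_iff hne, map_sub, dotProduct, dotProduct,
    map_sum, map_sum, sub_mul, Finset.sum_mul, Finset.sum_mul, ← Finset.sum_sub_distrib]
  refine Finset.sum_congr rfl fun j _ => ?_
  simp only [ofPair, algebraMap_add_algebraMap_mul_pow_char, map_mul]
  ring

section GraphCode

lemma forall_dotProduct_mulVec_sub_eq_zero_iff {R ι : Type*} [CommRing R] [Fintype ι]
    {A : Matrix ι ι R} (hA : A.IsSymm) {x y : ι → R} :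
    (∀ b, y ⬝ᵥ (A *ᵥ b) - x ⬝ᵥ b = 0) ↔ x = A *ᵥ y := by
  simp_rw [sub_eq_zero, dotProduct_mulVec, ← mulVec_transpose, hA.eq]
  exact dotProduct_eq_iff.trans eq_comm

variable {F K : Type*} [Field F] [CommRing K] [Algebra F K] {ι : Type*}

/-- Words of the additive graph code with adjacency matrix `A`, generated by `ω I + A`. -/
def graphWord [Fintype ι] (ω : K) (A : Matrix ι ι F) (a : ι → F) : ι → K :=
  ofPair ω (A *ᵥ a) a

lemma mem_span_range_circulant_rows_iff {n : ℕ} [NeZero n] (ω : K) (v : Fin n → F)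
    (u : Fin n → K) :
    u ∈ Submodule.span F (Set.range fun i : Fin n => fun j : Fin n =>
        algebraMap F K (v (j - i)) + (Pi.single 0 ω : Fin n → K) (j - i)) ↔
      u ∈ Set.range (graphWord ω (circulant v)) := by
  have hsum (a : Fin n → F) : ∑ i, a i • (fun j : Fin n =>
      algebraMap F K (v (j - i)) + (Pi.single 0 ω : Fin n → K) (j - i)) =
        graphWord ω (circulant v) a := by
    funext j
    simp only [Finset.sum_apply, Pi.smul_apply, smul_add, Finset.sum_add_distrib, Pi.single_apply,
      sub_eq_zero, smul_ite, smul_zero, Finset.sum_ite_eq, Finset.mem_univ, if_true]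
    simp only [graphWord, ofPair, mulVec, dotProduct, circulant_apply, map_sum, map_mul,
      Algebra.smul_def, mul_comm]
  simp only [Submodule.mem_span_range_iff_exists_fun, hsum, Set.mem_range]

variable [Nontrivial K] {ω : K}

lemma graphWord_injective [Fintype ι] (hω : ω ∉ Set.range (algebraMap F K)) (A : Matrix ι ι F) :
    Injective (graphWord ω A) :=
  fun _ _ h => ((ofPair_inj hω).1 h).2

lemma mem_range_graphWord_iff_forall_hermForm9 {n : ℕ} {ω : GaloisField 3 2}
    (hω : ω ∉ Set.range (algebraMap (ZMod 3) (GaloisField 3 2)))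
    {A : Matrix (Fin n) (Fin n) (ZMod 3)} (hA : A.IsSymm) (u : Fin n → GaloisField 3 2) :
    u ∈ Set.range (graphWord ω A) ↔ ∀ b, hermForm9 ω u (graphWord ω A b) = 0 := by
  obtain ⟨x, y, rfl⟩ := exists_ofPair_eq hω
    (by rw [GaloisField.card 3 2 two_ne_zero, Nat.card_zmod]) u
  simp only [graphWord, hermForm9_ofPair hω, FaithfulSMul.algebraMap_eq_zero_iff,
    forall_dotProduct_mulVec_sub_eq_zero_iff hA, Set.mem_range, ofPair_inj hω]
  exact ⟨fun ⟨a, hx, hy⟩ => hy ▸ hx.symm, fun h => ⟨y, h.symm, rfl⟩⟩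

end GraphCode

lemma natCard_subtype_mem_and {α β : Type*} {f : α → β} (hf : Injective f) {S : Set β}
    (hS : S = Set.range f) (P : β → Prop) :
    Nat.card {b // b ∈ S ∧ P b} = Nat.card {a // P (f a)} := by
  subst hS
  refine (Nat.card_congr (Equiv.ofBijective (fun a => ⟨f a.1, ⟨a.1, rfl⟩, a.2⟩) ⟨?_, ?_⟩)).symm
  · exact fun a b h => Subtype.ext (hf (congrArg Subtype.val h))
  · rintro ⟨_, ⟨a, rfl⟩, h⟩
    exact ⟨⟨a, h⟩, rfl⟩

lemma generator_row_eq {K : Type*} [CommRing K] [Algebra (ZMod 3) K] (ω : K) (k : Fin 6) :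
    ![ω, 0, 1, 1, 1, 0] k =
      algebraMap (ZMod 3) K (![0, 0, 1, 1, 1, 0] k) + (Pi.single 0 ω : Fin 6 → K) k := by
  fin_cases k <;> simp

lemma isSymm_circulant_adjacency : (circulant ![(0 : ZMod 3), 0, 1, 1, 1, 0]).IsSymm :=
  circulant_isSymm_iff.2 (by decide)

/-- `circulant ![0, 0, 1, 1, 1, 0] *ᵥ a` written out, so that the kernel enumerates all `3⁶`
words quickly. -/
def neighborSum (a : Fin 6 → ZMod 3) (j : Fin 6) : ZMod 3 :=
  a (j + 2) + a (j + 3) + a (j + 4)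

lemma circulant_adjacency_mulVec (a : Fin 6 → ZMod 3) :
    circulant ![(0 : ZMod 3), 0, 1, 1, 1, 0] *ᵥ a = neighborSum a := by
  funext j
  fin_cases j <;> simp [mulVec, dotProduct, Fin.sum_univ_six, neighborSum] <;> ring

section WeightDistribution

set_option maxRecDepth 40000

lemma four_le_symplecticWeight_neighborSum :
    ∀ a : Fin 6 → ZMod 3, a ≠ 0 → 4 ≤ symplecticWeight (neighborSum a) a := by
  decide

lemma card_symplecticWeight_neighborSum_eq_four :
    (Finset.univ.filter fun a : Fin 6 → ZMod 3 =>
      symplecticWeight (neighborSum a) a = 4).card = 120 := by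
  decide

lemma card_symplecticWeight_neighborSum_eq_five :
    (Finset.univ.filter fun a : Fin 6 → ZMod 3 =>
      symplecticWeight (neighborSum a) a = 5).card = 240 := by
  decide

lemma card_symplecticWeight_neighborSum_eq_six :
    (Finset.univ.filter fun a : Fin 6 → ZMod 3 =>
      symplecticWeight (neighborSum a) a = 6).card = 368 := by
  decide

end WeightDistribution

open Classical in
/-- The circulant graph code over `F_9` of length 6 whose generator matrix is the
    circulant matrix with first row `(ω, 0, 1, 1, 1, 0)` (`ω` a primitive element of
    `F_9`, the `i`-th row being the first row cyclically shifted) is a self-dual additive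
    `(6, 3^6, 4)` MDS code with weight enumerator
    `W(1,y) = 1 + 120 y⁴ + 240 y⁵ + 368 y⁶`. -/
theorem stmt18 (ω : GaloisField 3 2)
    (hω : ∀ x : GaloisField 3 2, x ≠ 0 → ∃ k : ℕ, ω ^ k = x)
    (C : Submodule (ZMod 3) (Fin 6 → GaloisField 3 2))
    (hC : C = Submodule.span (ZMod 3)
      (Set.range fun i : Fin 6 => fun j : Fin 6 =>
        ![ω, 0, 1, 1, 1, 0] (j - i))) :
    (∀ u, u ∈ C ↔ ∀ c ∈ C, hermForm9 ω u c = 0) ∧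
    Nat.card C = 3 ^ 6 ∧
    (∀ c ∈ C, c ≠ 0 → 4 ≤ (Finset.univ.filter fun j => c j ≠ 0).card) ∧
    Nat.card {c : Fin 6 → GaloisField 3 2 // c ∈ C ∧
        (Finset.univ.filter fun j => c j ≠ 0).card = 4} = 120 ∧
    Nat.card {c : Fin 6 → GaloisField 3 2 // c ∈ C ∧
        (Finset.univ.filter fun j => c j ≠ 0).card = 5} = 240 ∧
    Nat.card {c : Fin 6 → GaloisField 3 2 // c ∈ C ∧
        (Finset.univ.filter fun j => c j ≠ 0).card = 6} = 368 := by
  have hωF : ω ∉ Set.range (algebraMap (ZMod 3) (GaloisField 3 2)) :=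
    notMem_range_algebraMap_of_forall_exists_pow_eq hω
      (by rw [GaloisField.card 3 2 two_ne_zero, Nat.card_zmod]; norm_num)
  set A := circulant ![(0 : ZMod 3), 0, 1, 1, 1, 0]
  have hCA : (C : Set (Fin 6 → GaloisField 3 2)) = Set.range (graphWord ω A) := by
    ext u
    rw [SetLike.mem_coe, hC, ← mem_span_range_circulant_rows_iff]
    simp only [generator_row_eq ω]
  have hwt (a : Fin 6 → ZMod 3) : (Finset.univ.filter fun j => graphWord ω A a j ≠ 0).card =
      symplecticWeight (neighborSum a) a := by
    rw [← circulant_adjacency_mulVec]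
    exact card_filter_ofPair_ne_zero hωF _ _
  have hcount (k : ℕ) : Nat.card {c : Fin 6 → GaloisField 3 2 // c ∈ C ∧
      (Finset.univ.filter fun j => c j ≠ 0).card = k} =
      (Finset.univ.filter fun a : Fin 6 → ZMod 3 =>
        symplecticWeight (neighborSum a) a = k).card := by
    simp only [← SetLike.mem_coe]
    rw [natCard_subtype_mem_and (graphWord_injective hωF A) hCA]
    simp only [hwt]
    rw [Nat.card_eq_fintype_card, Fintype.card_subtype]
  refine ⟨fun u => ?_, ?_, ?_, (hcount 4).trans card_symplecticWeight_neighborSum_eq_four,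
    (hcount 5).trans card_symplecticWeight_neighborSum_eq_five,
    (hcount 6).trans card_symplecticWeight_neighborSum_eq_six⟩
  · simp only [← SetLike.mem_coe, hCA, Set.forall_mem_range]
    exact mem_range_graphWord_iff_forall_hermForm9 hωF isSymm_circulant_adjacency u
  · rw [← SetLike.coe_sort_coe, hCA, Nat.card_range_of_injective (graphWord_injective hωF A)]
    simp
  · intro c hc hc0
    obtain ⟨a, rfl⟩ : c ∈ Set.range (graphWord ω A) := hCA ▸ hc
    rw [hwt]
    refine four_le_symplecticWeight_neighborSum a ?_
    rintro rfl
    exact hc0 (funext fun j => by simp [graphWord, ofPair])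
end
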